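/- If an extended open graph has a gflow then |I| ≤ |O|; equivalently, the map g of a gflow, viewed as assigning to each non-output vertex a subset of non-input vertices, induces an injective-type counting constraint giving |Oᶜ| ≤ |Iᶜ|. -/

import Mathlib

open scoped symmDiff

inductive Pauli | X | Y | Z
deriving DecidableEq

inductive MPlane | XY | XZ | YZ
deriving DecidableEq

/-- The set of Pauli operators defining a measurement plane. -/
def MPlane.paulis : MPlane → Finset Pauli
  | .XY => {.X, .Y}
  | .XZ => {.X, .Z}
  | .YZ => {.Y, .Z}

variable {V : Type} [Fintype V] [DecidableEq V]

/-- Odd neighbourhood: vertices with an odd number of neighbours in `A`. -/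
def oddNbhd (G : SimpleGraph V) [DecidableRel G.Adj] (A : Finset V) : Finset V :=
  Finset.univ.filter fun w => Odd (A.filter (G.Adj w)).card

/-- `f` is extensive w.r.t. the strict order `r`. -/
def IsExtensive (O : Finset V) (r : V → V → Prop) (f : V → Finset V) : Prop :=
  ∀ u ∉ O, ∀ v ∈ f u, v ≠ u → r u v

/-- gflow of an extended open graph `(G, I, O, lam)`. -/
def IsGflow (G : SimpleGraph V) [DecidableRel G.Adj]
    (I O : Finset V) (lam : V → MPlane) (g : V → Finset V) : Prop :=
  (∀ u ∉ O, g u ⊆ Iᶜ) ∧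
  (∃ r : V → V → Prop, IsStrictOrder V r ∧
    IsExtensive O r (fun u => g u ∪ oddNbhd G (g u))) ∧
  ∀ u ∉ O,
    (lam u = .XY → u ∈ oddNbhd G (g u) ∧ u ∉ g u) ∧
    (lam u = .XZ → u ∈ g u ∧ u ∈ oddNbhd G (g u)) ∧
    (lam u = .YZ → u ∈ g u ∧ u ∉ oddNbhd G (g u))

/-- σ-normal forms for gflows. -/
def IsNF (σ : Pauli) (G : SimpleGraph V) [DecidableRel G.Adj]
    (O : Finset V) (g : V → Finset V) : Prop :=
  match σ with
  | .X => ∀ u ∉ O, oddNbhd G (g u) ⊆ insert u O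
  | .Y => ∀ u ∉ O, (g u ∆ oddNbhd G (g u)) ⊆ insert u O
  | .Z => ∀ u ∉ O, g u ⊆ insert u O

/-! Over `ZMod 2`, the indicator vectors of the correction sets `g u` (`u ∉ O`), all supported
on `Iᶜ`, are linearly independent, whence `|Oᶜ| ≤ |Iᶜ|`. For each `u ∉ O` the measurement-plane
condition provides a set `B` (`{u}` if `u ∈ g u`, otherwise the neighbourhood of `u`) whose
parity pairing is odd on `g u` and even on every `A` such that `u` lies neither in `A` nor in its
odd neighbourhood. By extensivity this holds for `A = g j` whenever `u` is not above `j` in the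
gflow order, so the pairing matrix is triangular along that order. -/

open Finset

theorem LinearIndependent.of_dual_triangular {K M ι : Type*} [CommRing K] [NoZeroDivisors K]
    [AddCommGroup M] [Module K M] {r : ι → ι → Prop} (hr : WellFounded r) {v : ι → M}
    (φ : ι → Module.Dual K M) (hdiag : ∀ i, φ i (v i) ≠ 0)
    (hoff : ∀ i j, j ≠ i → ¬ r j i → φ i (v j) = 0) : LinearIndependent K v := by
  rw [linearIndependent_iff']
  intro s c hsum i hi
  by_contra hci
  obtain ⟨u, ⟨hus, hcu⟩, hmin⟩ := hr.has_min {j | j ∈ s ∧ c j ≠ 0} ⟨i, hi, hci⟩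
  have hu : c u * φ u (v u) = 0 := by
    rw [← (φ u).map_zero, ← hsum, map_sum, sum_eq_single_of_mem u hus]
    · simp
    intro j hjs hju
    by_cases hcj : c j = 0
    · simp [hcj]
    · simp [hoff u j hju (hmin j ⟨hjs, hcj⟩)]
  exact mul_ne_zero hcu (hdiag u) hu

def indicatorOn (S A : Finset V) : S → ZMod 2 := fun x => if (x : V) ∈ A then 1 else 0

omit [Fintype V] in
theorem indicatorOn_dotProduct_indicatorOn {S A : Finset V} (B : Finset V) (hA : A ⊆ S) :
    indicatorOn S B ⬝ᵥ indicatorOn S A = #(A ∩ B) := by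
  have hsub : ({x : S | (x : V) ∈ B ∧ (x : V) ∈ A} : Finset S) = (A ∩ B).subtype (· ∈ S) := by
    ext x; simp [and_comm]
  simp only [dotProduct, indicatorOn, ite_zero_mul_ite_zero, mul_one]
  rw [sum_boole, hsub, card_subtype, filter_true_of_mem fun x hx => hA (mem_of_mem_inter_left hx)]

theorem exists_parity_separator (G : SimpleGraph V) [DecidableRel G.Adj] {A₀ : Finset V} {u : V}
    (h : u ∈ A₀ ∨ u ∈ oddNbhd G A₀) :
    ∃ B : Finset V, Odd #(A₀ ∩ B) ∧ ∀ A, u ∉ A → u ∉ oddNbhd G A → Even #(A ∩ B) := by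
  by_cases hu : u ∈ A₀
  · exact ⟨{u}, by simp [hu], fun A huA _ => by simp [huA]⟩
  · have hodd : ∀ A, u ∈ oddNbhd G A ↔ Odd #(A ∩ ({w | G.Adj u w} : Finset V)) := by
      simp [oddNbhd, inter_filter]
    refine ⟨({w | G.Adj u w} : Finset V), (hodd A₀).1 (h.resolve_left hu), fun A _ hA => ?_⟩
    exact Nat.not_odd_iff_even.mp fun h' => hA ((hodd A).2 h')

omit [Fintype V] [DecidableEq V] in
theorem IsExtensive.not_mem_of_not_rel {O : Finset V} {r : V → V → Prop} {f : V → Finset V}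
    (hf : IsExtensive O r f) {u j : V} (hj : j ∉ O) (hne : u ≠ j) (hju : ¬ r j u) : u ∉ f j :=
  fun hu => hju (hf j hj u hu hne)

section Gflow

variable {G : SimpleGraph V} [DecidableRel G.Adj] {I O : Finset V} {lam : V → MPlane}
  {g : V → Finset V}

theorem IsGflow.mem_or_mem_oddNbhd (hg : IsGflow G I O lam g) {u : V} (hu : u ∉ O) :
    u ∈ g u ∨ u ∈ oddNbhd G (g u) := by
  obtain ⟨hXY, hXZ, hYZ⟩ := hg.2.2 u hu
  cases hlam : lam u with
  | XY => exact .inr (hXY hlam).1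
  | XZ => exact .inl (hXZ hlam).1
  | YZ => exact .inl (hYZ hlam).1

theorem IsGflow.linearIndependent (hg : IsGflow G I O lam g) :
    LinearIndependent (ZMod 2) fun u : ↥Oᶜ => indicatorOn Iᶜ (g u) := by
  choose B hBodd hBeven using fun u : ↥Oᶜ =>
    exists_parity_separator G (hg.mem_or_mem_oddNbhd (mem_compl.mp u.2))
  obtain ⟨hgI, ⟨r, hr, hext⟩, -⟩ := hg
  have hwf : WellFounded (InvImage r (Subtype.val : ↥Oᶜ → V)) :=
    InvImage.wf _ (Finite.wellFounded_of_trans_of_irrefl r)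
  have hpair (u j : ↥Oᶜ) :
      dotProductBilin (ZMod 2) (ZMod 2) (indicatorOn Iᶜ (B u)) (indicatorOn Iᶜ (g j))
        = #(g j ∩ B u) := by
    rw [dotProductBilin_apply_apply,
      indicatorOn_dotProduct_indicatorOn _ (hgI j (mem_compl.mp j.2))]
  refine .of_dual_triangular hwf
    (fun u => dotProductBilin (ZMod 2) (ZMod 2) (indicatorOn Iᶜ (B u))) (fun u => ?_)
    (fun u j hne hju => ?_)
  · rw [hpair, Ne, ZMod.natCast_eq_zero_iff_even, Nat.not_even_iff_odd]
    exact hBodd u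
  · have hnot := hext.not_mem_of_not_rel (mem_compl.mp j.2) (Subtype.coe_ne_coe.mpr hne.symm) hju
    rw [mem_union, not_or] at hnot
    rw [hpair, ZMod.natCast_eq_zero_iff_even]
    exact hBeven u _ hnot.1 hnot.2

end Gflow

/-- Existence of a gflow implies |I| ≤ |O|, equivalently |Oᶜ| ≤ |Iᶜ|. -/
theorem gflow_card_le (G : SimpleGraph V) [DecidableRel G.Adj]
    (I O : Finset V) (lam : V → MPlane)
    (h : ∃ g : V → Finset V, IsGflow G I O lam g) :
    I.card ≤ O.card ∧ Oᶜ.card ≤ Iᶜ.card := by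
  obtain ⟨g, hg⟩ := h
  have hcompl : #Oᶜ ≤ #Iᶜ := by
    have := hg.linearIndependent.fintype_card_le_finrank
    rwa [Module.finrank_fintype_fun_eq_card, Fintype.card_coe, Fintype.card_coe] at this
  rw [card_compl, card_compl] at hcompl ⊢
  have := I.card_le_univ
  have := O.card_le_univ
  constructor <;> omega
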